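/- arXiv:1711.07177 — 2 statements merged into one kernel-verified Lean document; each statement's English description precedes it below -/
import Mathlib

section
/- Let $U: \mathbb{R} \to \mathbb{R}$ be continuously differentiable with $\int_{\mathbb{R}} e^{-U(x)}\,dx < \infty$, and suppose $U', U''$ exist and all integrals below converge absolutely. Define the kernel density $K(x,y) = (U'(2y-x))_+ e^{-\int_0^{2(y-x)}(U'(x+t))_+\,dt}\,\mathbb{1}_{\{y>x\}} + (-U'(2y-x))_+ e^{-\int_0^{2(x-y)}(-U'(x-t))_+\,dt}\,\mathbb{1}_{\{y<x\}}$. Then the density $\pi(x) \propto e^{-U(x)}$ satisfies $\pi(y) = \int_{-\infty}^{\infty} K(x,y)\pi(x)\,dx$ for all $y \in \mathbb{R}$. -/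
/-!
Write `π = exp (-U)` and fix `y`. The point `y` is reached only from `x < y` (moving right and
bouncing at `2y - x`) or from `x > y` (moving left and bouncing at `2y - x`), so after reflecting
the left half-line by `x ↦ 2y - x` both contributions live on `(y, ∞)`, where
`K(x, y) π(x) + K(2y - x, y) π(2y - x) = ((U' x)⁺ + (U' (2y - x))⁻) H(x) = -H'(x)` for
`H(x) = π(2y - x) exp (-∫_{2y-x}^x (U')⁺)`. Now `H(y) = π(y)`, and `H` is nonincreasing with
`0 ≤ H ≤ π` on `[y, ∞)`, so `H → 0` at `+∞` and integrating `-H'` over `(y, ∞)` gives `π(y)`.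
The same bound makes every integral absolutely convergent.
-/

open MeasureTheory Set Filter Topology Real

section Reflection

variable {E : Type*} [NormedAddCommGroup E] (c : ℝ)

lemma preimage_two_mul_sub_Iio : (fun x : ℝ => 2 * c - x) ⁻¹' Iio c = Ioi c := by
  rw [preimage_const_sub_Iio, two_mul, add_sub_cancel_right]

lemma integrableOn_Ioi_comp_two_mul_sub_iff {f : ℝ → E} :
    IntegrableOn (fun x => f (2 * c - x)) (Ioi c) ↔ IntegrableOn f (Iio c) := by
  rw [← preimage_two_mul_sub_Iio]
  exact (volume.measurePreserving_sub_left (2 * c)).integrableOn_comp_preimage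
    (Homeomorph.subLeft (2 * c)).measurableEmbedding

lemma integral_Ioi_comp_two_mul_sub [NormedSpace ℝ E] (f : ℝ → E) :
    ∫ x in Ioi c, f (2 * c - x) = ∫ x in Iio c, f x := by
  rw [← preimage_two_mul_sub_Iio]
  exact (volume.measurePreserving_sub_left (2 * c)).setIntegral_preimage_emb
    (Homeomorph.subLeft (2 * c)).measurableEmbedding f _

end Reflection

lemma MeasureTheory.IntegrableOn.of_continuousOn_of_norm_le {E : Type*} [NormedAddCommGroup E]
    {f : ℝ → E} {g : ℝ → ℝ} {s : Set ℝ} (hg : IntegrableOn g s) (hs : MeasurableSet s)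
    (hf : ContinuousOn f s) (hfg : ∀ x ∈ s, ‖f x‖ ≤ g x) : IntegrableOn f s :=
  hg.mono' (hf.aestronglyMeasurable hs) ((ae_restrict_iff' hs).mpr (ae_of_all _ hfg))

lemma Antitone.tendsto_atTop_zero_of_integrableOn {f : ℝ → ℝ} {a : ℝ} (hf : Antitone f)
    (h0 : 0 ≤ f) (hint : IntegrableOn f (Ioi a)) : Tendsto f atTop (𝓝 0) := by
  have hbdd : BddBelow (range f) := ⟨0, by rintro _ ⟨x, rfl⟩; exact h0 x⟩
  convert tendsto_atTop_ciInf hf hbdd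
  have hinf : 0 ≤ ⨅ x, f x := le_ciInf h0
  have hconst : IntegrableOn (fun _ => ⨅ x, f x) (Ioi a) :=
    hint.mono' aestronglyMeasurable_const <| ae_of_all _ fun x => by
      rw [norm_of_nonneg hinf]
      exact ciInf_le hbdd x
  rw [integrableOn_const_iff] at hconst
  rcases hconst with h | h
  · exact (enorm_eq_zero.mp h).symm
  · simp at h

lemma Continuous.posPart {α : Type*} [TopologicalSpace α] {f : α → ℝ} (hf : Continuous f) :
    Continuous fun x => (f x)⁺ :=
  hf.max continuous_const

lemma Continuous.negPart {α : Type*} [TopologicalSpace α] {f : α → ℝ} (hf : Continuous f) :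
    Continuous fun x => (f x)⁻ :=
  hf.neg.max continuous_const

/-- The density `K(x, y)`; `a⁺` and `a⁻` unfold to `max a 0` and `max (-a) 0` by `rfl`. -/
noncomputable def samplerKernel (U : ℝ → ℝ) (x y : ℝ) : ℝ :=
  (if x < y then
      (deriv U (2 * y - x))⁺ * exp (-∫ t in (0 : ℝ)..2 * (y - x), (deriv U (x + t))⁺)
    else 0) +
  (if y < x then
      (deriv U (2 * y - x))⁻ * exp (-∫ t in (0 : ℝ)..2 * (x - y), (deriv U (x - t))⁻)
    else 0)

/-- `exp (-U a)` times the probability that the chain, started at `a` in direction `+1`,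
passes `b` without a bounce. -/
noncomputable def survivalWeight (U : ℝ → ℝ) (a b : ℝ) : ℝ :=
  exp (-U a - ∫ s in a..b, (deriv U s)⁺)

section Potential

variable {U : ℝ → ℝ}

lemma samplerKernel_nonneg (U : ℝ → ℝ) (x y : ℝ) : 0 ≤ samplerKernel U x y := by
  unfold samplerKernel
  split_ifs <;> positivity

lemma integral_deriv_posPart_sub_negPart (hU : ContDiff ℝ 1 U) (a b : ℝ) :
    (∫ s in a..b, (deriv U s)⁺) - ∫ s in a..b, (deriv U s)⁻ = U b - U a := by
  have hc := hU.continuous_deriv le_rfl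
  rw [← intervalIntegral.integral_sub (hc.posPart.intervalIntegrable _ _)
    (hc.negPart.intervalIntegrable _ _)]
  simp only [posPart_sub_negPart]
  exact intervalIntegral.integral_deriv_eq_sub
    (fun x _ => (hU.differentiable one_ne_zero).differentiableAt) (hc.intervalIntegrable _ _)

lemma survivalWeight_eq_exp_negPart (hU : ContDiff ℝ 1 U) (a b : ℝ) :
    survivalWeight U a b = exp (-U b - ∫ s in a..b, (deriv U s)⁻) := by
  have := integral_deriv_posPart_sub_negPart hU a b
  rw [survivalWeight]
  congr 1
  linarith

lemma survivalWeight_le_exp (hU : ContDiff ℝ 1 U) {a b : ℝ} (hab : a ≤ b) :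
    survivalWeight U a b ≤ exp (-U b) := by
  rw [survivalWeight_eq_exp_negPart hU, exp_le_exp, sub_le_self_iff]
  exact intervalIntegral.integral_nonneg hab fun s _ => negPart_nonneg _

lemma samplerKernel_mul_exp_of_lt {x y : ℝ} (h : x < y) :
    samplerKernel U x y * exp (-U x) =
      (deriv U (2 * y - x))⁺ * survivalWeight U x (2 * y - x) := by
  rw [samplerKernel, if_pos h, if_neg h.not_gt, add_zero,
    intervalIntegral.integral_comp_add_left (fun s => (deriv U s)⁺), survivalWeight,
    mul_assoc, ← exp_add]
  ring_nf

lemma samplerKernel_mul_exp_of_gt (hU : ContDiff ℝ 1 U) {x y : ℝ} (h : y < x) :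
    samplerKernel U x y * exp (-U x) =
      (deriv U (2 * y - x))⁻ * survivalWeight U (2 * y - x) x := by
  rw [samplerKernel, if_neg h.not_gt, if_pos h, zero_add,
    intervalIntegral.integral_comp_sub_left (fun s => (deriv U s)⁻),
    survivalWeight_eq_exp_negPart hU, mul_assoc, ← exp_add]
  ring_nf

lemma samplerKernel_mul_exp_add_reflect (hU : ContDiff ℝ 1 U) {x y : ℝ} (h : y < x) :
    samplerKernel U x y * exp (-U x) + samplerKernel U (2 * y - x) y * exp (-U (2 * y - x)) =
      ((deriv U x)⁺ + (deriv U (2 * y - x))⁻) * survivalWeight U (2 * y - x) x := by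
  rw [samplerKernel_mul_exp_of_gt hU h, samplerKernel_mul_exp_of_lt (by linarith),
    sub_sub_cancel]
  ring

lemma norm_samplerKernel_mul_exp_le (hU : ContDiff ℝ 1 U) {x y : ℝ} (h : y < x) :
    ‖samplerKernel U x y * exp (-U x)‖ ≤
        ((deriv U x)⁺ + (deriv U (2 * y - x))⁻) * survivalWeight U (2 * y - x) x ∧
      ‖samplerKernel U (2 * y - x) y * exp (-U (2 * y - x))‖ ≤
        ((deriv U x)⁺ + (deriv U (2 * y - x))⁻) * survivalWeight U (2 * y - x) x := by
  have h₁ := mul_nonneg (samplerKernel_nonneg U x y) (exp_pos (-U x)).le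
  have h₂ := mul_nonneg (samplerKernel_nonneg U (2 * y - x) y) (exp_pos (-U (2 * y - x))).le
  rw [← samplerKernel_mul_exp_add_reflect hU h, norm_of_nonneg h₁, norm_of_nonneg h₂]
  exact ⟨le_add_of_nonneg_right h₂, le_add_of_nonneg_left h₁⟩

lemma hasDerivAt_survivalWeight_reflect (hU : ContDiff ℝ 1 U) (y x : ℝ) :
    HasDerivAt (fun x => survivalWeight U (2 * y - x) x)
      (-((deriv U x)⁺ + (deriv U (2 * y - x))⁻) * survivalWeight U (2 * y - x) x) x := by
  have hpos := (hU.continuous_deriv le_rfl).posPart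
  have hprim : ∀ w, HasDerivAt (fun w => ∫ s in (0 : ℝ)..w, (deriv U s)⁺) (deriv U w)⁺ w :=
    fun w => (hpos.integral_hasStrictDerivAt 0 w).hasDerivAt
  have hU' : HasDerivAt U (deriv U (2 * y - x)) (2 * y - x) :=
    (hU.differentiable one_ne_zero _).hasDerivAt
  have hweight : ∀ x, survivalWeight U (2 * y - x) x = exp (-U (2 * y - x) -
      ((∫ s in (0 : ℝ)..x, (deriv U s)⁺) - ∫ s in (0 : ℝ)..2 * y - x, (deriv U s)⁺)) :=
    fun x => by
      rw [survivalWeight, intervalIntegral.integral_interval_sub_left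
        (hpos.intervalIntegrable _ _) (hpos.intervalIntegrable _ _)]
  simp only [hweight]
  convert ((hU'.comp_const_sub (2 * y) x).fun_neg.fun_sub
    ((hprim x).fun_sub ((hprim (2 * y - x)).comp_const_sub (2 * y) x))).exp using 1
  rw [← hweight]
  linear_combination survivalWeight U (2 * y - x) x * posPart_sub_negPart (deriv U (2 * y - x))

lemma continuous_survivalWeight_reflect (hU : ContDiff ℝ 1 U) (y : ℝ) :
    Continuous fun x => survivalWeight U (2 * y - x) x :=
  continuous_iff_continuousAt.mpr fun x => (hasDerivAt_survivalWeight_reflect hU y x).continuousAt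

lemma antitone_survivalWeight_reflect (hU : ContDiff ℝ 1 U) (y : ℝ) :
    Antitone fun x => survivalWeight U (2 * y - x) x := by
  have hd := hasDerivAt_survivalWeight_reflect hU y
  refine antitone_of_deriv_nonpos (fun x => (hd x).differentiableAt) fun x => ?_
  rw [(hd x).deriv, neg_mul, neg_nonpos]
  unfold survivalWeight
  positivity

lemma tendsto_survivalWeight_reflect_atTop (hU : ContDiff ℝ 1 U) {y : ℝ}
    (hint : IntegrableOn (fun x => exp (-U x)) (Ioi y)) :
    Tendsto (fun x => survivalWeight U (2 * y - x) x) atTop (𝓝 0) := by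
  refine (antitone_survivalWeight_reflect hU y).tendsto_atTop_zero_of_integrableOn
    (fun x => (exp_pos _).le) (hint.of_continuousOn_of_norm_le measurableSet_Ioi
      (continuous_survivalWeight_reflect hU y).continuousOn fun x hx => ?_)
  rw [survivalWeight, norm_of_nonneg (exp_pos _).le, ← survivalWeight]
  exact survivalWeight_le_exp hU (by linarith [mem_Ioi.mp hx])

lemma integrableOn_Ioi_hazard_mul_survivalWeight_reflect (hU : ContDiff ℝ 1 U) {y : ℝ}
    (hint : IntegrableOn (fun x => exp (-U x)) (Ioi y)) :
    IntegrableOn (fun x => ((deriv U x)⁺ + (deriv U (2 * y - x))⁻) *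
      survivalWeight U (2 * y - x) x) (Ioi y) :=
  (integrableOn_Ioi_deriv_of_nonpos' (fun x _ => hasDerivAt_survivalWeight_reflect hU y x)
    (fun x _ => by rw [neg_mul, neg_nonpos]; unfold survivalWeight; positivity)
    (tendsto_survivalWeight_reflect_atTop hU hint)).neg.congr_fun
      (fun x _ => by simp only [Pi.neg_apply, neg_mul, neg_neg]) measurableSet_Ioi

lemma integral_Ioi_hazard_mul_survivalWeight_reflect (hU : ContDiff ℝ 1 U) {y : ℝ}
    (hint : IntegrableOn (fun x => exp (-U x)) (Ioi y)) :
    ∫ x in Ioi y, ((deriv U x)⁺ + (deriv U (2 * y - x))⁻) * survivalWeight U (2 * y - x) x =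
      exp (-U y) := by
  have h := integral_Ioi_of_hasDerivAt_of_nonpos' (a := y)
    (fun x _ => hasDerivAt_survivalWeight_reflect hU y x)
    (fun x _ => by rw [neg_mul, neg_nonpos]; unfold survivalWeight; positivity)
    (tendsto_survivalWeight_reflect_atTop hU hint)
  simp only [neg_mul, integral_neg, zero_sub, neg_inj] at h
  rw [h, two_mul, add_sub_cancel_right, survivalWeight, intervalIntegral.integral_same, sub_zero]

lemma integrableOn_Ioi_samplerKernel_mul_exp (hU : ContDiff ℝ 1 U) {y : ℝ}
    (hint : IntegrableOn (fun x => exp (-U x)) (Ioi y)) :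
    IntegrableOn (fun x => samplerKernel U x y * exp (-U x)) (Ioi y) := by
  have hcont : Continuous fun x => (deriv U (2 * y - x))⁻ * survivalWeight U (2 * y - x) x :=
    ((hU.continuous_deriv le_rfl).comp (continuous_sub_left _)).negPart.mul
      (continuous_survivalWeight_reflect hU y)
  exact (integrableOn_Ioi_hazard_mul_survivalWeight_reflect hU hint).of_continuousOn_of_norm_le
    measurableSet_Ioi (hcont.continuousOn.congr fun x hx => samplerKernel_mul_exp_of_gt hU hx)
    fun x hx => (norm_samplerKernel_mul_exp_le hU hx).1

lemma integrableOn_Ioi_samplerKernel_mul_exp_reflect (hU : ContDiff ℝ 1 U) {y : ℝ}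
    (hint : IntegrableOn (fun x => exp (-U x)) (Ioi y)) :
    IntegrableOn (fun x => samplerKernel U (2 * y - x) y * exp (-U (2 * y - x))) (Ioi y) := by
  have hcont : Continuous fun x => (deriv U x)⁺ * survivalWeight U (2 * y - x) x :=
    (hU.continuous_deriv le_rfl).posPart.mul (continuous_survivalWeight_reflect hU y)
  refine (integrableOn_Ioi_hazard_mul_survivalWeight_reflect hU hint).of_continuousOn_of_norm_le
    measurableSet_Ioi (hcont.continuousOn.congr fun x hx => ?_)
    fun x hx => (norm_samplerKernel_mul_exp_le hU hx).2
  rw [samplerKernel_mul_exp_of_lt (by linarith [mem_Ioi.mp hx]), sub_sub_cancel]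

lemma integrableOn_Iic_samplerKernel_mul_exp (hU : ContDiff ℝ 1 U) {y : ℝ}
    (hint : IntegrableOn (fun x => exp (-U x)) (Ioi y)) :
    IntegrableOn (fun x => samplerKernel U x y * exp (-U x)) (Iic y) :=
  (integrableOn_Iic_iff_integrableOn_Iio).mpr ((integrableOn_Ioi_comp_two_mul_sub_iff y).mp
    (integrableOn_Ioi_samplerKernel_mul_exp_reflect hU hint))

theorem integral_samplerKernel_mul_exp (hU : ContDiff ℝ 1 U)
    (hint : Integrable fun x => exp (-U x)) (y : ℝ) :
    ∫ x, samplerKernel U x y * exp (-U x) = exp (-U y) := by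
  have hright := integrableOn_Ioi_samplerKernel_mul_exp hU hint.integrableOn (y := y)
  have hleft := integrableOn_Ioi_samplerKernel_mul_exp_reflect hU hint.integrableOn (y := y)
  calc ∫ x, samplerKernel U x y * exp (-U x)
      = (∫ x in Iic y, samplerKernel U x y * exp (-U x)) +
          ∫ x in Ioi y, samplerKernel U x y * exp (-U x) :=
        (intervalIntegral.integral_Iic_add_Ioi
          (integrableOn_Iic_samplerKernel_mul_exp hU hint.integrableOn) hright).symm
    _ = (∫ x in Ioi y, samplerKernel U (2 * y - x) y * exp (-U (2 * y - x))) +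
          ∫ x in Ioi y, samplerKernel U x y * exp (-U x) := by
        rw [integral_Iic_eq_integral_Iio,
          integral_Ioi_comp_two_mul_sub y fun x => samplerKernel U x y * exp (-U x)]
    _ = ∫ x in Ioi y,
          ((deriv U x)⁺ + (deriv U (2 * y - x))⁻) * survivalWeight U (2 * y - x) x := by
        rw [← integral_add hleft hright]
        refine setIntegral_congr_fun measurableSet_Ioi fun x hx => ?_
        rw [add_comm]
        exact samplerKernel_mul_exp_add_reflect hU hx
    _ = exp (-U y) := integral_Ioi_hazard_mul_survivalWeight_reflect hU hint.integrableOn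

end Potential

theorem main_sampler_stationarity_general
    (U : ℝ → ℝ) (hU : ContDiff ℝ 2 U)
    (hint : Integrable (fun x => Real.exp (-U x)))
    (K : ℝ → ℝ → ℝ)
    (hK : ∀ x y, K x y =
      (if x < y then
        max (deriv U (2 * y - x)) 0 *
          Real.exp (-(∫ t in (0:ℝ)..(2 * (y - x)), max (deriv U (x + t)) 0))
       else 0)
      +
      (if y < x then
        max (-(deriv U (2 * y - x))) 0 *
          Real.exp (-(∫ t in (0:ℝ)..(2 * (x - y)), max (-(deriv U (x - t))) 0))
       else 0)) :
    ∀ y : ℝ, Real.exp (-U y) = ∫ x : ℝ, K x y * Real.exp (-U x) := by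
  obtain rfl : K = samplerKernel U := funext₂ hK
  exact fun y => (integral_samplerKernel_mul_exp (hU.of_le one_le_two) hint y).symm

/-- Theorem 3.1: the density proportional to `exp (-U)` is stationary for the kernel of the
main sampler. -/
theorem main_sampler_stationarity
    (U : ℝ → ℝ) (hU : ContDiff ℝ 2 U)
    (hint : Integrable (fun x => Real.exp (-U x)))
    (K : ℝ → ℝ → ℝ)
    (hK : ∀ x y, K x y =
      (if x < y then
        max (deriv U (2 * y - x)) 0 *
          Real.exp (-(∫ t in (0:ℝ)..(2 * (y - x)), max (deriv U (x + t)) 0))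
       else 0)
      +
      (if y < x then
        max (-(deriv U (2 * y - x))) 0 *
          Real.exp (-(∫ t in (0:ℝ)..(2 * (x - y)), max (-(deriv U (x - t))) 0))
       else 0))
    (hKint : ∀ y, Integrable (fun x => K x y * Real.exp (-U x))) :
    ∀ y : ℝ, Real.exp (-U y) = ∫ x : ℝ, K x y * Real.exp (-U x) :=
  main_sampler_stationarity_general U hU hint K hK
end

section
/- Let $\mu_1 < \mu_2$, $\sigma > 0$, $w_1 \in (0,1)$, $w_2 = 1 - w_1$, and define the Gaussian mixture potential via $e^{-U(x)} = w_1 e^{-(x-\mu_1)^2/(2\sigma^2)} + w_2 e^{-(x-\mu_2)^2/(2\sigma^2)}$. Define $U_1(x) = \frac{(x-\mu_1)^2}{2\sigma^2}\mathbb{1}_{\{x > \mu_1\}}$ and $U_2(x) = \frac{(x-\mu_1)^2}{2\sigma^2}\mathbb{1}_{\{x < \mu_1\}} - \log\left(w_1 + w_2 e^{\frac{1}{2\sigma^2}(2x(\mu_2 - \mu_1) + \mu_1^2 - \mu_2^2)}\right)$. Then $U = U_1 + U_2$, $U_1$ is nondecreasing, and $U_2$ is nonincreasing on $\mathbb{R}$.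 -/
/-- Monotone decomposition of the two-component Gaussian mixture potential. -/
theorem gaussian_mixture_monotone_decomposition
    (μ₁ μ₂ σ w₁ w₂ : ℝ) (hμ : μ₁ < μ₂) (hσ : 0 < σ)
    (hw₁ : w₁ ∈ Set.Ioo (0:ℝ) 1) (hw₂ : w₂ = 1 - w₁)
    (U U₁ U₂ : ℝ → ℝ)
    (hU : ∀ x, Real.exp (-U x)
      = w₁ * Real.exp (-(x - μ₁)^2 / (2 * σ^2)) + w₂ * Real.exp (-(x - μ₂)^2 / (2 * σ^2)))
    (hU₁ : ∀ x, U₁ x = if μ₁ < x then (x - μ₁)^2 / (2 * σ^2) else 0)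
    (hU₂ : ∀ x, U₂ x = (if x < μ₁ then (x - μ₁)^2 / (2 * σ^2) else 0)
      - Real.log (w₁ + w₂ * Real.exp ((2 * x * (μ₂ - μ₁) + μ₁^2 - μ₂^2) / (2 * σ^2)))) :
    (∀ x, U x = U₁ x + U₂ x) ∧ Monotone U₁ ∧ Antitone U₂ := by
  obtain ⟨hw1pos, hw1lt⟩ := hw₁
  have hw2pos : 0 < w₂ := by rw [hw₂]; linarith
  have hσ2 : (0:ℝ) < 2 * σ^2 := by positivity
  have hpos : ∀ x : ℝ,
      0 < w₁ + w₂ * Real.exp ((2 * x * (μ₂ - μ₁) + μ₁^2 - μ₂^2) / (2 * σ^2)) := by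
    intro x; positivity
  have hUeq : ∀ x, U x = (x - μ₁)^2 / (2 * σ^2)
      - Real.log (w₁ + w₂ * Real.exp ((2 * x * (μ₂ - μ₁) + μ₁^2 - μ₂^2) / (2 * σ^2))) := by
    intro x
    have h2 : -(x - μ₁)^2 / (2*σ^2) + (2 * x * (μ₂ - μ₁) + μ₁^2 - μ₂^2) / (2 * σ^2)
        = -(x - μ₂)^2 / (2*σ^2) := by
      field_simp; ring
    have hexp : Real.exp (-(x - μ₂)^2 / (2*σ^2))
        = Real.exp (-(x - μ₁)^2 / (2*σ^2))
          * Real.exp ((2 * x * (μ₂ - μ₁) + μ₁^2 - μ₂^2) / (2 * σ^2)) := by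
      rw [← Real.exp_add, h2]
    have h1 : Real.exp (-U x) = Real.exp (-(x - μ₁)^2 / (2*σ^2))
        * (w₁ + w₂ * Real.exp ((2 * x * (μ₂ - μ₁) + μ₁^2 - μ₂^2) / (2 * σ^2))) := by
      rw [hU x, hexp]; ring
    have h3 := congrArg Real.log h1
    rw [Real.log_exp, Real.log_mul (Real.exp_pos _).ne' (hpos x).ne', Real.log_exp] at h3
    have h4 : -(x - μ₁)^2 / (2*σ^2) = -((x - μ₁)^2 / (2*σ^2)) := by ring
    rw [h4] at h3
    linarith
  refine ⟨?_, ?_, ?_⟩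
  · intro x
    rw [hUeq x, hU₁ x, hU₂ x]
    rcases lt_trichotomy x μ₁ with h | h | h
    · rw [if_neg (not_lt.mpr h.le), if_pos h]; ring
    · rw [if_neg (not_lt.mpr h.le), if_neg (not_lt.mpr h.ge), h]; simp
    · rw [if_pos h, if_neg (not_lt.mpr h.le)]; ring
  · intro a b hab
    rw [hU₁ a, hU₁ b]
    split_ifs with h1 h2 h2
    · gcongr
    · exact absurd (h1.trans_le hab) h2
    · positivity
    · exact le_refl 0
  · intro a b hab
    rw [hU₂ a, hU₂ b]
    have hlog : Real.log (w₁ + w₂ * Real.exp ((2 * a * (μ₂ - μ₁) + μ₁^2 - μ₂^2) / (2 * σ^2)))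
        ≤ Real.log (w₁ + w₂ * Real.exp ((2 * b * (μ₂ - μ₁) + μ₁^2 - μ₂^2) / (2 * σ^2))) := by
      apply Real.log_le_log (hpos a)
      gcongr
    have hif : (if b < μ₁ then (b - μ₁)^2 / (2 * σ^2) else 0)
        ≤ (if a < μ₁ then (a - μ₁)^2 / (2 * σ^2) else 0) := by
      split_ifs with h1 h2 h2
      · gcongr (?_) / (2*σ^2)
        nlinarith
      · exact absurd (hab.trans_lt h1) h2
      · positivity
      · exact le_refl 0
    exact sub_le_sub hif hlog
end
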